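/- Fix c ∈ ℝ and define X̃ : ℝ² → M₂(ℂ) by X̃(ũ,v) = e^{cv}·[[ũ², ũ·e^{iv}],[ũ·e^{−iv}, 1]]. Then: (i) ⟨∂_v X̃(ũ,v), ∂_v X̃(ũ,v)⟩ = e^{2cv}·ũ² for all (ũ,v); (ii) consequently the curve L(v) := X̃(0,v) is lightlike, i.e. ⟨L′(v), L′(v)⟩ = 0 for all v; and (iii) L(v) = R^H(−cv/2)·[[0,0],[0,1]]·R^H(−cv/2)⋆ where R^H(t) = diag(e^t, e^{−t}), so L is a lightlike circle generated by hyperbolic rotations. -/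

import Mathlib

open Matrix

/-- The Lorentz inner product on 2×2 complex matrices, via determinant polarization. -/
noncomputable def ip (V W : Matrix (Fin 2) (Fin 2) ℂ) : ℂ :=
  -(1 / 2) * ((V + W).det - V.det - W.det)

/-- The analytic extension X̃ of the non-rotational zero mean curvature surface. -/
noncomputable def Xt (c : ℝ) (u v : ℝ) : Matrix (Fin 2) (Fin 2) ℂ :=
  Complex.exp ((c : ℂ) * v) •
    !![(u : ℂ) ^ 2, (u : ℂ) * Complex.exp (Complex.I * v);
       (u : ℂ) * Complex.exp (-(Complex.I * v)), 1]

/-- Its partial derivative in v. -/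
noncomputable def XtV (c : ℝ) (u v : ℝ) : Matrix (Fin 2) (Fin 2) ℂ :=
  !![(c : ℂ) * Complex.exp ((c : ℂ) * v) * (u : ℂ) ^ 2,
     (u : ℂ) * ((c : ℂ) + Complex.I) * Complex.exp (((c : ℂ) + Complex.I) * v);
     (u : ℂ) * ((c : ℂ) - Complex.I) * Complex.exp (((c : ℂ) - Complex.I) * v),
     (c : ℂ) * Complex.exp ((c : ℂ) * v)]

/-- The hyperbolic rotation R^H(t) = diag(e^{t}, e^{-t}). -/
noncomputable def RH (t : ℝ) : Matrix (Fin 2) (Fin 2) ℂ :=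
  !![(Real.exp t : ℂ), 0; 0, (Real.exp (-t) : ℂ)]

/-!
Every entry of `X̃` is an exponential monomial `k · e^{a v}` with `a ∈ {c, c + i, c - i}`, which
gives the `v`-derivative entrywise. Since `⟨V, V⟩ = -det V`, part (i) reduces to
`(c + i)(c - i) = c² + 1`, and (ii) is its case `ũ = 0`. At `ũ = 0` only the corner entry
`e^{cv} = (e^{cv/2})²` survives, which is what conjugating `[[0,0],[0,1]]` by the real diagonal
`R^H(-cv/2)` produces.
-/

open Complex

lemma ip_self (V : Matrix (Fin 2) (Fin 2) ℂ) : ip V V = -V.det := by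
  rw [ip, ← two_smul ℂ V, det_smul, Fintype.card_fin]
  ring

lemma hasDerivAt_const_mul_cexp_mul_ofReal (k a : ℂ) (v : ℝ) :
    HasDerivAt (fun t : ℝ => k * exp (a * t)) (k * a * exp (a * v)) v := by
  simpa [mul_comm, mul_assoc] using
    (((hasDerivAt_id (v : ℂ)).const_mul a).cexp.const_mul k).comp_ofReal

section

variable (c u v : ℝ) (i j : Fin 2)

lemma Xt_apply : Xt c u v i j =
    !![(u : ℂ) ^ 2, u; u, 1] i j * exp (!![(c : ℂ), c + I; c - I, c] i j * v) := by
  fin_cases i <;> fin_cases j <;> simp [Xt, add_mul, sub_mul, exp_add, exp_sub, exp_neg] <;> ring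

lemma XtV_apply : XtV c u v i j =
    !![(u : ℂ) ^ 2, u; u, 1] i j * !![(c : ℂ), c + I; c - I, c] i j *
      exp (!![(c : ℂ), c + I; c - I, c] i j * v) := by
  fin_cases i <;> fin_cases j <;> simp [XtV, mul_comm, mul_left_comm, mul_assoc]

lemma hasDerivAt_Xt_apply : HasDerivAt (fun v' => Xt c u v' i j) (XtV c u v i j) v := by
  simp only [Xt_apply, XtV_apply]
  exact hasDerivAt_const_mul_cexp_mul_ofReal _ _ v

lemma det_XtV : (XtV c u v).det = -((Real.exp (2 * c * v) * u ^ 2 : ℝ) : ℂ) := by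
  have hexp : exp ((c + I) * v) * exp ((c - I) * v) = exp (c * v) ^ 2 := by
    rw [← exp_add, sq, ← exp_add]
    ring_nf
  have hexp_two : ((Real.exp (2 * c * v) : ℝ) : ℂ) = exp (c * v) ^ 2 := by
    push_cast
    rw [sq, ← exp_add]
    ring_nf
  rw [XtV, det_fin_two_of, ofReal_mul, hexp_two, ofReal_pow]
  linear_combination -(u : ℂ) ^ 2 * (c ^ 2 - I ^ 2) * hexp + (u : ℂ) ^ 2 * exp (c * v) ^ 2 * I_sq

end

lemma Xt_zero (c v : ℝ) : Xt c 0 v = !![0, 0; 0, ((Real.exp (c * v) : ℝ) : ℂ)] := by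
  ext i j
  fin_cases i <;> fin_cases j <;> simp [Xt]

lemma conjTranspose_RH (t : ℝ) : (RH t)ᴴ = RH t := by
  ext i j
  fin_cases i <;> fin_cases j <;> simp [RH, conjTranspose_apply, -ofReal_exp]

lemma RH_mul_mul_conjTranspose (t : ℝ) :
    RH t * !![0, 0; 0, 1] * (RH t)ᴴ = !![0, 0; 0, ((Real.exp (-2 * t) : ℝ) : ℂ)] := by
  rw [conjTranspose_RH, RH, mul_fin_two, mul_fin_two, show -2 * t = -t + -t by ring, Real.exp_add]
  simp

theorem analytic_extension_lightlike_circle (c : ℝ) :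
    -- (o) XtV is the partial derivative of Xt in v
    (∀ u v : ℝ, ∀ i j : Fin 2,
      HasDerivAt (fun v' => Xt c u v' i j) (XtV c u v i j) v) ∧
    -- (i) ⟨X̃_v, X̃_v⟩ = e^{2cv}·ũ²
    (∀ u v : ℝ, ip (XtV c u v) (XtV c u v) = ((Real.exp (2 * c * v) * u ^ 2 : ℝ) : ℂ)) ∧
    -- (ii) the curve L(v) = X̃(0,v) is lightlike
    (∀ v : ℝ, ip (XtV c 0 v) (XtV c 0 v) = 0) ∧
    -- (iii) L is a lightlike circle generated by hyperbolic rotations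
    (∀ v : ℝ, Xt c 0 v = RH (-(c * v) / 2) * !![0, 0; 0, 1] * (RH (-(c * v) / 2))ᴴ) := by
  have h_ip (u v : ℝ) : ip (XtV c u v) (XtV c u v) = ((Real.exp (2 * c * v) * u ^ 2 : ℝ) : ℂ) := by
    rw [ip_self, det_XtV, neg_neg]
  refine ⟨hasDerivAt_Xt_apply c, h_ip, fun v => by simpa using h_ip 0 v, fun v => ?_⟩
  rw [Xt_zero, RH_mul_mul_conjTranspose, show -2 * (-(c * v) / 2) = c * v by ring]
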